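/- arXiv:1702.07067 — 3 statements merged into one kernel-verified Lean document; each statement's English description precedes it below -/
import Mathlib

section
/- For every z ∈ ℂ and every complex λ with Re(λ) > -1, one has 2^{-1/2}π^{-3/4} e^{-z²/4} ∫₀^∞ e^{zx - x²/2} x^λ dx = Σ_{k=0}^∞ b_k(λ) z^k, where b_k(λ) = π^{-3/4} 2^{(k+λ)/2 - 1} Σ_{m=0}^{⌊k/2⌋} [Γ((k+λ+1)/2 - m)/(m!(k-2m)!)] · (-1)^m / 2^{3m}. -/
/-!
Expanding `e^{zx} = ∑ₙ (zx)ⁿ/n!` and integrating termwise against `x^λ e^{-x²/2}` on `(0, ∞)`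
(legitimate because `e^{|z|x} x^{Re λ} e^{-x²/2}` is integrable) expresses the integral as
`∑ₙ zⁿ/n! · 2^{(λ+n+1)/2 - 1} Γ((λ+n+1)/2)`, the Gaussian moments being Gamma values after the
substitution `t = x²`. Multiplying by `e^{-z²/4} = ∑ₘ (-z²/4)ᵐ/m!`, whose series lives on even
powers, the Cauchy product pairs `m` with `n = k - 2m`, which is the inner sum over `m ≤ ⌊k/2⌋`.
-/

open MeasureTheory

theorem hasSum_sum_range_div_two_mul_of_summable_norm {R : Type*} [NormedRing R] [CompleteSpace R]
    {f g : ℕ → R} (hf : Summable fun m => ‖f m‖) (hg : Summable fun n => ‖g n‖) :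
    HasSum (fun k => ∑ m ∈ Finset.range (k / 2 + 1), f m * g (k - 2 * m))
      ((∑' m, f m) * ∑' n, g n) := by
  have hinj : Function.Injective (fun m : ℕ => 2 * m) := fun a b h => by simpa using h
  set f' := Function.extend (fun m : ℕ => 2 * m) f 0
  have hf' : Summable fun k => ‖f' k‖ :=
    ((summable_extend_zero hinj).2 hf).congr fun k => by
      simp only [f', Function.apply_extend norm, Function.comp_def, Pi.zero_apply, norm_zero]
      rfl
  rw [← tsum_extend_zero hinj f]
  convert hasSum_sum_range_mul_of_summable_norm hf' hg using 2 with k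
  have hsub : (Finset.range (k / 2 + 1)).map ⟨_, hinj⟩ ⊆ Finset.range (k + 1) := by
    intro i hi
    simp only [Finset.mem_map, Finset.mem_range, Function.Embedding.coeFn_mk] at hi ⊢
    omega
  rw [← Finset.sum_subset hsub, Finset.sum_map]
  · simp [f', hinj.extend_apply]
  · intro i hik hi
    simp only [Finset.mem_map, Finset.mem_range, Function.Embedding.coeFn_mk, not_exists,
      not_and] at hik hi
    have : f' i = 0 := Function.extend_apply' _ _ _ fun ⟨m, hm⟩ => hi m (by omega) hm
    rw [this, zero_mul]

theorem Complex.integral_cpow_mul_exp_neg_mul_sq_Ioi {w : ℂ} (hw : -1 < w.re) {b : ℝ} (hb : 0 < b) :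
    ∫ x in Set.Ioi (0 : ℝ), (x : ℂ) ^ w * Complex.exp (-(b * x ^ 2))
      = (1 / b) ^ ((w + 1) / 2) * Complex.Gamma ((w + 1) / 2) / 2 := by
  have ha : 0 < ((w + 1) / 2).re := by
    simp only [Complex.div_re, Complex.add_re, Complex.one_re]
    norm_num
    linarith
  rw [← Complex.integral_cpow_mul_exp_neg_mul_Ioi ha hb, ← integral_comp_rpow_Ioi_of_pos
    (g := fun t : ℝ => (t : ℂ) ^ ((w + 1) / 2 - 1) * Complex.exp (-(b * t))) two_pos,
    ← integral_div]
  refine setIntegral_congr_fun measurableSet_Ioi fun x (hx : 0 < x) => ?_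
  have hx0 : (x : ℂ) ≠ 0 := by exact_mod_cast hx.ne'
  have hsq : (((x ^ (2 : ℝ) : ℝ)) : ℂ) ^ ((w + 1) / 2 - 1) * x = (x : ℂ) ^ w := by
    rw [Real.rpow_two, Complex.ofReal_pow, sq, Complex.mul_cpow_ofReal_nonneg hx.le hx.le,
      ← Complex.cpow_add _ _ hx0]
    nth_rw 2 [← Complex.cpow_one (x : ℂ)]
    rw [← Complex.cpow_add _ _ hx0]
    ring_nf
  rw [real_smul, ← hsq, show (2 : ℝ) - 1 = 1 by norm_num, Real.rpow_one, Real.rpow_two]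
  push_cast
  ring

section ExpSeries

variable {μ : Measure ℝ} {φ : ℝ → ℂ} {z : ℂ}

theorem norm_pow_div_factorial_mul (n : ℕ) (x : ℝ) :
    ‖(z * x) ^ n / n.factorial * φ x‖ = (‖z‖ * |x|) ^ n / n.factorial * ‖φ x‖ := by
  simp [norm_pow, Complex.norm_real]

theorem integrable_pow_div_factorial_mul (hφ : AEStronglyMeasurable φ μ)
    (h : Integrable (fun x => Real.exp (‖z‖ * |x|) * ‖φ x‖) μ) (n : ℕ) :
    Integrable (fun x : ℝ => (z * x) ^ n / n.factorial * φ x) μ := by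
  refine h.mono' ((by fun_prop : Continuous fun x : ℝ => (z * x) ^ n / n.factorial)
    |>.aestronglyMeasurable.mul hφ) (.of_forall fun x => ?_)
  rw [norm_pow_div_factorial_mul]
  gcongr
  exact Real.pow_div_factorial_le_exp (x := ‖z‖ * |x|) (by positivity) n

theorem summable_integral_norm_pow_div_factorial_mul (hφ : AEStronglyMeasurable φ μ)
    (h : Integrable (fun x => Real.exp (‖z‖ * |x|) * ‖φ x‖) μ) :
    Summable fun n : ℕ => ∫ x, ‖(z * x) ^ n / n.factorial * φ x‖ ∂μ := by
  refine summable_of_sum_range_le (c := ∫ x, Real.exp (‖z‖ * |x|) * ‖φ x‖ ∂μ)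
    (fun n => integral_nonneg fun x => norm_nonneg _) fun N => ?_
  rw [← integral_finsetSum _ fun n _ => (integrable_pow_div_factorial_mul hφ h n).norm]
  refine integral_mono_of_nonneg (.of_forall fun x => by positivity) h (.of_forall fun x => ?_)
  simp only [norm_pow_div_factorial_mul, ← Finset.sum_mul]
  gcongr
  exact Real.sum_le_exp_of_nonneg (by positivity) N

theorem hasSum_integral_pow_div_factorial_mul (hφ : AEStronglyMeasurable φ μ)
    (h : Integrable (fun x => Real.exp (‖z‖ * |x|) * ‖φ x‖) μ) :
    HasSum (fun n : ℕ => ∫ x, (z * x) ^ n / n.factorial * φ x ∂μ)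
      (∫ x, Complex.exp (z * x) * φ x ∂μ) := by
  have hexp (x : ℝ) : HasSum (fun n : ℕ => (z * x) ^ n / n.factorial * φ x)
      (Complex.exp (z * x) * φ x) := by
    rw [Complex.exp_eq_exp_ℂ]
    exact (NormedSpace.expSeries_div_hasSum_exp (z * x)).mul_right (φ x)
  rw [integral_congr_ae (.of_forall fun x => (hexp x).tsum_eq.symm)]
  exact hasSum_integral_of_summable_integral_norm (integrable_pow_div_factorial_mul hφ h)
    (summable_integral_norm_pow_div_factorial_mul hφ h)

theorem summable_norm_integral_pow_div_factorial_mul (hφ : AEStronglyMeasurable φ μ)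
    (h : Integrable (fun x => Real.exp (‖z‖ * |x|) * ‖φ x‖) μ) :
    Summable fun n : ℕ => ‖∫ x, (z * x) ^ n / n.factorial * φ x ∂μ‖ :=
  (summable_integral_norm_pow_div_factorial_mul hφ h).of_nonneg_of_le (fun _ => norm_nonneg _)
    fun _ => norm_integral_le_integral_norm _

end ExpSeries

section GaussianWeight

variable {lam : ℂ}

theorem norm_ofReal_cpow_mul_exp_neg_sq_div_two {x : ℝ} (hx : 0 < x) :
    ‖(x : ℂ) ^ lam * Complex.exp (-(x : ℂ) ^ 2 / 2)‖ = x ^ lam.re * Real.exp (-x ^ 2 / 2) := by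
  rw [norm_mul, Complex.norm_cpow_eq_rpow_re_of_pos hx, Complex.norm_exp]
  norm_cast

theorem integrableOn_exp_mul_abs_mul_norm_cpow_mul_exp_neg_sq_div_two (hlam : -1 < lam.re) (a : ℝ) :
    IntegrableOn
      (fun x : ℝ => Real.exp (a * |x|) * ‖(x : ℂ) ^ lam * Complex.exp (-(x : ℂ) ^ 2 / 2)‖)
      (Set.Ioi 0) := by
  refine ((integrableOn_rpow_mul_exp_neg_mul_sq (b := 1 / 4) (by norm_num) hlam).const_mul
    (Real.exp (a ^ 2))).mono' (by fun_prop) ?_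
  filter_upwards [ae_restrict_mem measurableSet_Ioi] with x (hx : 0 < x)
  have hexp : Real.exp (a * x) * Real.exp (-x ^ 2 / 2) ≤
      Real.exp (a ^ 2) * Real.exp (-(1 / 4) * x ^ 2) := by
    rw [← Real.exp_add, ← Real.exp_add, Real.exp_le_exp]
    nlinarith [sq_nonneg (x / 2 - a)]
  rw [Real.norm_of_nonneg (by positivity), norm_ofReal_cpow_mul_exp_neg_sq_div_two hx,
    abs_of_pos hx]
  calc _ = x ^ lam.re * (Real.exp (a * x) * Real.exp (-x ^ 2 / 2)) := by ring
    _ ≤ x ^ lam.re * (Real.exp (a ^ 2) * Real.exp (-(1 / 4) * x ^ 2)) := by gcongr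
    _ = _ := by ring

theorem integral_pow_div_factorial_mul_cpow_mul_exp_neg_sq_div_two (hlam : -1 < lam.re) (z : ℂ)
    (n : ℕ) :
    ∫ x in Set.Ioi (0 : ℝ),
        (z * x) ^ n / n.factorial * ((x : ℂ) ^ lam * Complex.exp (-(x : ℂ) ^ 2 / 2))
      = z ^ n / n.factorial *
        (2 ^ ((lam + n + 1) / 2) * Complex.Gamma ((lam + n + 1) / 2) / 2) := by
  have hre : -1 < (lam + n).re := by
    simp only [Complex.add_re, Complex.natCast_re]
    linarith [n.cast_nonneg (α := ℝ)]
  rw [setIntegral_congr_fun measurableSet_Ioi (g := fun x : ℝ => z ^ n / n.factorial *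
      ((x : ℂ) ^ (lam + n) * Complex.exp (-((1 / 2 : ℝ) * x ^ 2)))) fun x (hx : 0 < x) => ?_,
    integral_const_mul, Complex.integral_cpow_mul_exp_neg_mul_sq_Ioi hre one_half_pos]
  · norm_num
  · dsimp only
    rw [Complex.cpow_add _ _ (by exact_mod_cast hx.ne'), Complex.cpow_natCast]
    push_cast
    ring_nf

end GaussianWeight

theorem bargmann_cauchy_product_term (lam z : ℂ) {k m : ℕ} (hm : 2 * m ≤ k) :
    (((2 : ℝ) ^ (-(1 / 2) : ℝ) : ℝ) : ℂ) * ((-z ^ 2 / 4) ^ m / m.factorial *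
      (z ^ (k - 2 * m) / (k - 2 * m).factorial * (2 ^ ((lam + ↑(k - 2 * m) + 1) / 2) *
        Complex.Gamma ((lam + ↑(k - 2 * m) + 1) / 2) / 2)))
    = 2 ^ (((k : ℂ) + lam) / 2 - 1) * (Complex.Gamma (((k : ℂ) + lam + 1) / 2 - m) /
        ((m.factorial : ℂ) * ((k - 2 * m).factorial : ℂ)) * ((-1 : ℂ) ^ m / 2 ^ (3 * m)) *
          z ^ k) := by
  obtain ⟨j, rfl⟩ := Nat.exists_eq_add_of_le hm
  simp only [Nat.add_sub_cancel_left]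
  set s : ℂ := ((↑(2 * m + j) : ℂ) + lam) / 2
  have harg : (lam + j + 1) / 2 = s + 1 / 2 - m := by
    simp only [s]
    push_cast
    ring
  have harg' : ((↑(2 * m + j) : ℂ) + lam + 1) / 2 - m = s + 1 / 2 - m := by
    simp only [s]
    ring
  have hhalf : (((2 : ℝ) ^ (-(1 / 2) : ℝ) : ℝ) : ℂ) * 2 ^ (s + 1 / 2 - m) = 2 ^ s / 2 ^ m := by
    rw [Complex.ofReal_cpow zero_le_two]
    push_cast
    rw [← Complex.cpow_add _ _ two_ne_zero, ← Complex.cpow_natCast,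
      ← Complex.cpow_sub _ _ two_ne_zero]
    ring_nf
  have hs : (2 : ℂ) ^ (s - 1) = 2 ^ s / 2 := by
    rw [Complex.cpow_sub _ _ two_ne_zero, Complex.cpow_one]
  rw [harg, harg', hs, div_pow, show (4 : ℂ) ^ m = 2 ^ m * 2 ^ m by rw [← mul_pow]; norm_num]
  linear_combination ((-z ^ 2) ^ m / (2 ^ m * 2 ^ m) / m.factorial * (z ^ j / j.factorial) *
    Complex.Gamma (s + 1 / 2 - m) / 2) * hhalf

/-- Taylor expansion of the Bargmann transform of `x₊^λ` for `Re λ > -1`: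
`2^{-1/2}π^{-3/4} e^{-z²/4} ∫₀^∞ e^{zx-x²/2} x^λ dx = Σ_k b_k(λ) z^k`, where
`b_k(λ) = π^{-3/4} 2^{(k+λ)/2-1} Σ_{m=0}^{⌊k/2⌋} Γ((k+λ+1)/2-m)/(m!(k-2m)!) (-1)^m/2^{3m}`. -/
theorem bargmann_xplus_lambda_taylor (lam : ℂ) (hlam : -1 < lam.re) (z : ℂ) :
    HasSum
      (fun k : ℕ =>
        ((Real.pi ^ (-(3 / 4) : ℝ) : ℝ) : ℂ) * (2 : ℂ) ^ (((k : ℂ) + lam) / 2 - 1) *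
          (∑ m ∈ Finset.range (k / 2 + 1),
            Complex.Gamma (((k : ℂ) + lam + 1) / 2 - m) /
                ((Nat.factorial m : ℂ) * (Nat.factorial (k - 2 * m) : ℂ)) *
              ((-1 : ℂ) ^ m / 2 ^ (3 * m))) * z ^ k)
      ((((2 : ℝ) ^ (-(1 / 2) : ℝ) * Real.pi ^ (-(3 / 4) : ℝ) : ℝ) : ℂ) *
        Complex.exp (-z ^ 2 / 4) *
        ∫ x in Set.Ioi (0 : ℝ), Complex.exp (z * x - (x : ℂ) ^ 2 / 2) * (x : ℂ) ^ lam) := by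
  set φ : ℝ → ℂ := fun x => (x : ℂ) ^ lam * Complex.exp (-(x : ℂ) ^ 2 / 2)
  have hφ : AEStronglyMeasurable φ (volume.restrict (Set.Ioi 0)) := by fun_prop
  have hdom := integrableOn_exp_mul_abs_mul_norm_cpow_mul_exp_neg_sq_div_two hlam ‖z‖
  have hmoments := hasSum_integral_pow_div_factorial_mul hφ hdom
  have hmoments_norm := summable_norm_integral_pow_div_factorial_mul hφ hdom
  simp only [φ, integral_pow_div_factorial_mul_cpow_mul_exp_neg_sq_div_two hlam]
    at hmoments hmoments_norm
  have hgauss := NormedSpace.expSeries_div_hasSum_exp (𝔸 := ℂ) (-z ^ 2 / 4)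
  rw [← Complex.exp_eq_exp_ℂ] at hgauss
  have hprod := hasSum_sum_range_div_two_mul_of_summable_norm (R := ℂ)
    (NormedSpace.norm_expSeries_div_summable (-z ^ 2 / 4)) hmoments_norm
  rw [hgauss.tsum_eq, hmoments.tsum_eq] at hprod
  have hfinal := (hprod.mul_left (((2 : ℝ) ^ (-(1 / 2) : ℝ) : ℝ) : ℂ)).mul_left
    (((Real.pi ^ (-(3 / 4) : ℝ) : ℝ) : ℂ))
  convert hfinal using 1
  · rfl -- the two sides carry defeq but distinct `AddCommMonoid ℂ` instances
  · ext k
    rw [mul_assoc, mul_assoc]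
    congr 1
    rw [Finset.sum_mul, Finset.mul_sum, Finset.mul_sum]
    refine Finset.sum_congr rfl fun m hm => (bargmann_cauchy_product_term lam z ?_).symm
    rw [Finset.mem_range] at hm
    omega
  · have hintegrand (x : ℝ) : Complex.exp (z * x - (x : ℂ) ^ 2 / 2) * (x : ℂ) ^ lam =
        Complex.exp (z * x) * ((x : ℂ) ^ lam * Complex.exp (-(x : ℂ) ^ 2 / 2)) := by
      rw [sub_eq_add_neg, Complex.exp_add, neg_div]
      ring
    simp only [hintegrand, Complex.ofReal_mul]
    ring
end

section
/- For every z ∈ ℂ, the limit lim_{ε↓0} ∫_{|x|>ε} e^{zx - x²/2}/x dx exists and equals Σ_{ν=0}^∞ (2 z^{2ν+1}/(2ν+1)!) ∫₀^∞ x^{2ν} e^{-x²/2} dx = Σ_{ν=0}^∞ √(2π) (2ν)! z^{2ν+1} / ((2ν+1)! ν! 2^ν). -/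
/-! Pairing `x` with `-x` turns the principal-value integral into
`∫_ε^∞ 2 sinh(zx) e^{-x²/2} / x dx`, whose integrand is bounded by `2|z| e^{|z|x - x²/2}` and hence
integrable near `0`, so the limit `ε ↓ 0` exists by dominated convergence. Expanding `sinh` in its
power series and integrating term by term (the series of absolute values converges) gives
`Σ 2 z^{2ν+1}/(2ν+1)! · M_{2ν}` for the half-line Gaussian moments `M_k`, and integration by parts
gives `M_{k+2} = (k+1) M_k` with `M_0 = √(2π)/2`. -/

open MeasureTheory Filter Set Real Topology

section PrincipalValue

variable {E : Type*} [NormedAddCommGroup E] [NormedSpace ℝ E]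

theorem integral_abs_gt_eq_integral_Ioi_add_comp_neg {f : ℝ → E} {ε : ℝ} (hε : 0 ≤ ε)
    (hf : IntegrableOn f {x | ε < |x|}) :
    ∫ x in {x | ε < |x|}, f x = ∫ x in Ioi ε, (f x + f (-x)) := by
  have hset : {x : ℝ | ε < |x|} = Iio (-ε) ∪ Ioi ε := by
    ext x
    simp only [mem_ofPred_eq, mem_union, mem_Iio, mem_Ioi, lt_abs]
    constructor <;> rintro (h | h) <;> first | (left; linarith) | (right; linarith)
  rw [hset] at hf ⊢
  have hIio : IntegrableOn f (Iio (-ε)) := hf.mono_set subset_union_left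
  have hIoi : IntegrableOn f (Ioi ε) := hf.mono_set subset_union_right
  rw [setIntegral_union (Ioi_disjoint_Iio_of_le (by linarith)).symm measurableSet_Ioi hIio hIoi,
    integral_add hIoi hIio.comp_neg_Ioi, add_comm, ← integral_Iic_eq_integral_Iio,
    ← integral_comp_neg_Ioi]

theorem tendsto_setIntegral_Ioi_nhdsGT {f : ℝ → E} {a : ℝ} (hf : IntegrableOn f (Ioi a)) :
    Tendsto (fun ε => ∫ x in Ioi ε, f x) (𝓝[>] a) (𝓝 (∫ x in Ioi a, f x)) := by
  have hind : ∀ ε ∈ Ioi a, ∫ x in Ioi a, (Ioi ε).indicator f x = ∫ x in Ioi ε, f x :=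
    fun ε hε => by
      rw [setIntegral_indicator measurableSet_Ioi, Ioi_inter_Ioi, max_eq_right (le_of_lt hε)]
  refine Tendsto.congr' (eventually_nhdsWithin_of_forall hind) ?_
  refine tendsto_integral_filter_of_dominated_convergence (fun x => ‖f x‖)
    (.of_forall fun _ => hf.aestronglyMeasurable.indicator measurableSet_Ioi)
    (.of_forall fun _ => .of_forall fun x => norm_indicator_le_norm_self f x) hf.norm ?_
  rw [ae_restrict_iff' measurableSet_Ioi]
  refine .of_forall fun x (hx : a < x) => tendsto_const_nhds.congr' ?_
  filter_upwards [Ioo_mem_nhdsGT hx] with ε hε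
  exact (indicator_of_mem hε.2 f).symm

end PrincipalValue

theorem Complex.norm_sinh_le (w : ℂ) : ‖Complex.sinh w‖ ≤ ‖w‖ * Real.exp ‖w‖ := by
  have h1 (u : ℂ) : ‖Complex.exp u - 1‖ ≤ ‖u‖ * Real.exp ‖u‖ := by
    simpa using Complex.norm_exp_sub_sum_le_norm_mul_exp u 1
  have h2 : Complex.sinh w = ((Complex.exp w - 1) - (Complex.exp (-w) - 1)) / 2 := by
    rw [Complex.sinh]; ring
  rw [h2, norm_div, Complex.norm_two, div_le_iff₀ two_pos]
  calc _ ≤ ‖Complex.exp w - 1‖ + ‖Complex.exp (-w) - 1‖ := norm_sub_le _ _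
    _ ≤ ‖w‖ * Real.exp ‖w‖ + ‖-w‖ * Real.exp ‖-w‖ := add_le_add (h1 w) (h1 (-w))
    _ = _ := by rw [norm_neg]; ring

theorem integrable_exp_mul_sub_sq_div_two (a : ℝ) :
    Integrable (fun x : ℝ => Real.exp (a * x - x ^ 2 / 2)) := by
  have h := ((integrable_exp_neg_mul_sq (b := 1 / 2) (by norm_num)).comp_sub_right a).const_mul
    (Real.exp (a ^ 2 / 2))
  refine h.congr (.of_forall fun x => ?_)
  simp only [← Real.exp_add]
  ring_nf

noncomputable def halfGaussMoment (k : ℕ) : ℝ := ∫ x in Ioi (0 : ℝ), x ^ k * Real.exp (-x ^ 2 / 2)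

theorem integrableOn_pow_mul_exp_neg_sq_div_two (k : ℕ) :
    IntegrableOn (fun x : ℝ => x ^ k * Real.exp (-x ^ 2 / 2)) (Ioi 0) := by
  simpa [Real.rpow_natCast, neg_div, div_eq_mul_inv, mul_comm] using
    integrableOn_rpow_mul_exp_neg_mul_sq (b := 1 / 2) (by norm_num) (s := k)
      (by linarith [k.cast_nonneg (α := ℝ)])

theorem tendsto_pow_mul_exp_neg_sq_div_two_atTop (k : ℕ) :
    Tendsto (fun x : ℝ => x ^ k * Real.exp (-x ^ 2 / 2)) atTop (𝓝 0) := by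
  have h := (rpow_mul_exp_neg_mul_sq_isLittleO_exp_neg (b := 1 / 2) (by norm_num) k).trans_tendsto
    (Real.tendsto_exp_atBot.comp (tendsto_id.const_mul_atTop_of_neg (by norm_num : -(1/2 : ℝ) < 0)))
  simpa [Real.rpow_natCast, neg_div, div_eq_mul_inv, mul_comm] using h

theorem halfGaussMoment_add_two (k : ℕ) :
    halfGaussMoment (k + 2) = (k + 1) * halfGaussMoment k := by
  have hderiv : ∀ x ∈ Ioi (0 : ℝ), HasDerivAt (fun x => -(x ^ (k + 1) * Real.exp (-x ^ 2 / 2)))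
      (x ^ (k + 2) * Real.exp (-x ^ 2 / 2) - (k + 1) * (x ^ k * Real.exp (-x ^ 2 / 2))) x := by
    intro x _
    have hE : HasDerivAt (fun x : ℝ => -x ^ 2 / 2) (-x) x :=
      ((hasDerivAt_pow 2 x).neg.div_const 2).congr_deriv (by ring)
    refine ((hasDerivAt_pow (k + 1) x).mul hE.exp).neg.congr_deriv ?_
    push_cast
    ring
  have hint := (integrableOn_pow_mul_exp_neg_sq_div_two (k + 2)).sub
    ((integrableOn_pow_mul_exp_neg_sq_div_two k).const_mul ((k : ℝ) + 1))
  have hibp := integral_Ioi_of_hasDerivAt_of_tendsto (by fun_prop : Continuous _).continuousWithinAt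
    hderiv hint (by simpa using (tendsto_pow_mul_exp_neg_sq_div_two_atTop (k + 1)).neg)
  rw [integral_sub (integrableOn_pow_mul_exp_neg_sq_div_two (k + 2))
    ((integrableOn_pow_mul_exp_neg_sq_div_two k).const_mul _), integral_const_mul,
    zero_pow k.succ_ne_zero, zero_mul, neg_zero, sub_zero] at hibp
  rw [halfGaussMoment, halfGaussMoment]
  linarith

theorem halfGaussMoment_zero : halfGaussMoment 0 = √(2 * π) / 2 := by
  simpa [halfGaussMoment, neg_div, div_eq_mul_inv, mul_comm] using integral_gaussian_Ioi (1 / 2)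

theorem halfGaussMoment_two_mul (ν : ℕ) :
    halfGaussMoment (2 * ν) = √(2 * π) * (2 * ν).factorial / (2 * ν.factorial * 2 ^ ν) := by
  induction ν with
  | zero => simp [halfGaussMoment_zero]
  | succ ν ih =>
    rw [mul_add, mul_one, halfGaussMoment_add_two, ih, Nat.factorial_succ, Nat.factorial_succ,
      Nat.factorial_succ]
    push_cast
    field_simp
    ring

noncomputable def sinhGaussKernel (z : ℂ) (x : ℝ) : ℂ :=
  2 * Complex.sinh (z * x) * ((Real.exp (-x ^ 2 / 2) : ℝ) : ℂ) / x

theorem exp_div_add_exp_div_neg_eq_sinhGaussKernel (z : ℂ) (x : ℝ) :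
    Complex.exp (z * x - (x : ℂ) ^ 2 / 2) / x
      + Complex.exp (z * ↑(-x) - (↑(-x) : ℂ) ^ 2 / 2) / ↑(-x) = sinhGaussKernel z x := by
  have hsplit (w : ℂ) : Complex.exp (w - (x : ℂ) ^ 2 / 2)
      = Complex.exp w * ((Real.exp (-x ^ 2 / 2) : ℝ) : ℂ) := by
    rw [Complex.ofReal_exp, ← Complex.exp_add]
    push_cast
    ring_nf
  rw [sinhGaussKernel, Complex.sinh, Complex.ofReal_neg, neg_sq, mul_neg, hsplit, hsplit]
  ring

theorem integrableOn_exp_div_of_lt_abs (z : ℂ) {ε : ℝ} (hε : 0 < ε) :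
    IntegrableOn (fun x : ℝ => Complex.exp (z * x - (x : ℂ) ^ 2 / 2) / x) {x | ε < |x|} := by
  have hmeas : MeasurableSet {x : ℝ | ε < |x|} := measurableSet_lt measurable_const (by fun_prop)
  refine ((integrable_exp_mul_sub_sq_div_two z.re).const_mul ε⁻¹).integrableOn.mono'
    (by fun_prop : Measurable _).aestronglyMeasurable ((ae_restrict_iff' hmeas).2 ?_)
  refine .of_forall fun x (hx : ε < |x|) => ?_
  have hre : (z * x - (x : ℂ) ^ 2 / 2).re = z.re * x - x ^ 2 / 2 := by
    simp [pow_two]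
  rw [norm_div, Complex.norm_exp, hre, Complex.norm_real, Real.norm_eq_abs, ← div_eq_inv_mul]
  exact div_le_div_of_nonneg_left (Real.exp_pos _).le hε hx.le

theorem norm_sinhGaussKernel_le (z : ℂ) {x : ℝ} (hx : 0 < x) :
    ‖sinhGaussKernel z x‖ ≤ 2 * ‖z‖ * Real.exp (‖z‖ * x - x ^ 2 / 2) := by
  have hzx : ‖z * x‖ = ‖z‖ * x := by rw [norm_mul, Complex.norm_real, Real.norm_of_nonneg hx.le]
  rw [sinhGaussKernel, norm_div, norm_mul, norm_mul, Complex.norm_real, Complex.norm_real,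
    Real.norm_of_nonneg hx.le, Real.norm_of_nonneg (Real.exp_pos _).le, Complex.norm_two,
    div_le_iff₀ hx, sub_eq_add_neg, Real.exp_add, ← neg_div]
  calc 2 * ‖Complex.sinh (z * x)‖ * Real.exp (-x ^ 2 / 2)
      ≤ 2 * (‖z‖ * x * Real.exp (‖z‖ * x)) * Real.exp (-x ^ 2 / 2) := by
        gcongr
        simpa only [hzx] using Complex.norm_sinh_le (z * x)
    _ = _ := by ring

theorem integrableOn_sinhGaussKernel (z : ℂ) : IntegrableOn (sinhGaussKernel z) (Ioi 0) := by
  refine ((integrable_exp_mul_sub_sq_div_two ‖z‖).const_mul (2 * ‖z‖)).integrableOn.mono'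
    (by unfold sinhGaussKernel; fun_prop : Measurable _).aestronglyMeasurable
    ((ae_restrict_iff' measurableSet_Ioi).2 (.of_forall fun x hx => norm_sinhGaussKernel_le z hx))

theorem hasSum_sinhGaussKernel (z : ℂ) {x : ℝ} (hx : x ≠ 0) :
    HasSum (fun ν : ℕ => 2 * z ^ (2 * ν + 1) / ((2 * ν + 1).factorial : ℂ) *
      ((x ^ (2 * ν) * Real.exp (-x ^ 2 / 2) : ℝ) : ℂ)) (sinhGaussKernel z x) := by
  have hxC : (x : ℂ) ≠ 0 := Complex.ofReal_ne_zero.2 hx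
  have hsinh := (Complex.hasSum_sinh (z * x)).mul_left (2 * ((Real.exp (-x ^ 2 / 2) : ℝ) : ℂ) / x)
  rw [show 2 * ((Real.exp (-x ^ 2 / 2) : ℝ) : ℂ) / x * Complex.sinh (z * x) = sinhGaussKernel z x
    by rw [sinhGaussKernel]; ring] at hsinh
  refine hsinh.congr_fun fun ν => ?_
  push_cast
  field_simp
  ring

theorem two_mul_pow_div_factorial_mul_halfGaussMoment (z : ℂ) (ν : ℕ) :
    2 * z ^ (2 * ν + 1) / ((2 * ν + 1).factorial : ℂ) * (halfGaussMoment (2 * ν) : ℂ)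
      = ((√(2 * π) * (2 * ν).factorial : ℝ) : ℂ) * z ^ (2 * ν + 1)
        / ((2 * ν + 1).factorial * ν.factorial * 2 ^ ν) := by
  rw [halfGaussMoment_two_mul]
  push_cast
  field_simp

theorem summable_norm_mul_halfGaussMoment (z : ℂ) :
    Summable fun ν : ℕ =>
      ‖2 * z ^ (2 * ν + 1) / ((2 * ν + 1).factorial : ℂ)‖ * halfGaussMoment (2 * ν) := by
  refine .of_nonneg_of_le (fun ν => ?_) (fun ν => ?_)
    ((Real.summable_pow_div_factorial (‖z‖ ^ 2 / 2)).mul_left (√(2 * π) * ‖z‖))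
  · rw [halfGaussMoment_two_mul]
    positivity
  · have hterm : ‖2 * z ^ (2 * ν + 1) / ((2 * ν + 1).factorial : ℂ)‖ * halfGaussMoment (2 * ν)
        = √(2 * π) * ‖z‖ * ((‖z‖ ^ 2 / 2) ^ ν / ν.factorial) / (2 * ν + 1) := by
      rw [halfGaussMoment_two_mul, norm_div, norm_mul, norm_pow, Complex.norm_natCast,
        Complex.norm_two, Nat.factorial_succ, pow_succ, pow_mul, div_pow]
      push_cast
      field_simp
    rw [hterm]
    exact div_le_self (by positivity) (by linarith [ν.cast_nonneg (α := ℝ)])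

theorem hasSum_integral_sinhGaussKernel (z : ℂ) :
    HasSum (fun ν : ℕ => 2 * z ^ (2 * ν + 1) / ((2 * ν + 1).factorial : ℂ) *
      (halfGaussMoment (2 * ν) : ℂ)) (∫ x in Ioi 0, sinhGaussKernel z x) := by
  let F (ν : ℕ) (x : ℝ) : ℂ := 2 * z ^ (2 * ν + 1) / ((2 * ν + 1).factorial : ℂ) *
    ((x ^ (2 * ν) * Real.exp (-x ^ 2 / 2) : ℝ) : ℂ)
  have hF_int (ν : ℕ) : IntegrableOn (F ν) (Ioi 0) :=
    (integrableOn_pow_mul_exp_neg_sq_div_two (2 * ν)).ofReal.const_mul _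
  have hF_norm (ν : ℕ) : ∫ x in Ioi 0, ‖F ν x‖
      = ‖2 * z ^ (2 * ν + 1) / ((2 * ν + 1).factorial : ℂ)‖ * halfGaussMoment (2 * ν) := by
    rw [halfGaussMoment, ← integral_const_mul]
    refine setIntegral_congr_fun measurableSet_Ioi fun x (hx : 0 < x) => ?_
    rw [norm_mul, Complex.norm_real, Real.norm_of_nonneg (by positivity)]
  have hswap := hasSum_integral_of_summable_integral_norm hF_int
    ((summable_norm_mul_halfGaussMoment z).congr fun ν => (hF_norm ν).symm)
  rw [setIntegral_congr_fun measurableSet_Ioi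
    fun x (hx : 0 < x) => (hasSum_sinhGaussKernel z hx.ne').tsum_eq] at hswap
  refine hswap.congr_fun fun ν => ?_
  rw [integral_const_mul, integral_complex_ofReal, halfGaussMoment]

/-- The principal-value limit `lim_{ε↓0} ∫_{|x|>ε} e^{zx-x²/2}/x dx` exists and equals
`Σ_ν (2 z^{2ν+1}/(2ν+1)!) ∫₀^∞ x^{2ν} e^{-x²/2} dx
  = Σ_ν √(2π) (2ν)! z^{2ν+1} / ((2ν+1)! ν! 2^ν)`. -/
theorem pv_bargmann_limit (z : ℂ) :
    Tendsto
      (fun ε : ℝ => ∫ x in {x : ℝ | ε < |x|},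
        Complex.exp (z * x - (x : ℂ) ^ 2 / 2) / (x : ℂ))
      (nhdsWithin 0 (Set.Ioi 0))
      (nhds (∑' ν : ℕ,
        2 * z ^ (2 * ν + 1) / (Nat.factorial (2 * ν + 1) : ℂ) *
          (((∫ x in Set.Ioi (0 : ℝ), x ^ (2 * ν) * Real.exp (-x ^ 2 / 2)) : ℝ) : ℂ))) ∧
    (∑' ν : ℕ,
        2 * z ^ (2 * ν + 1) / (Nat.factorial (2 * ν + 1) : ℂ) *
          (((∫ x in Set.Ioi (0 : ℝ), x ^ (2 * ν) * Real.exp (-x ^ 2 / 2)) : ℝ) : ℂ))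
      = ∑' ν : ℕ,
        ((Real.sqrt (2 * Real.pi) * (Nat.factorial (2 * ν) : ℝ) : ℝ) : ℂ) *
          z ^ (2 * ν + 1) /
          ((Nat.factorial (2 * ν + 1) : ℂ) * (Nat.factorial ν : ℂ) * 2 ^ ν) := by
  refine ⟨?_, tsum_congr (two_mul_pow_div_factorial_mul_halfGaussMoment z)⟩
  have hlim := tendsto_setIntegral_Ioi_nhdsGT (integrableOn_sinhGaussKernel z)
  rw [← (hasSum_integral_sinhGaussKernel z).tsum_eq] at hlim
  refine hlim.congr' ?_
  filter_upwards [self_mem_nhdsWithin] with ε (hε : 0 < ε)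
  rw [integral_abs_gt_eq_integral_Ioi_add_comp_neg hε.le (integrableOn_exp_div_of_lt_abs z hε)]
  exact setIntegral_congr_fun measurableSet_Ioi fun x _ =>
    (exp_div_add_exp_div_neg_eq_sinhGaussKernel z x).symm
end

section
/- For every z ∈ ℂ, ∫_ℝ e^{zx - x²/2} sgn(x) dx = Σ_{ν=0}^∞ (2^{ν+1} ν! / (2ν+1)!) z^{2ν+1}, where sgn(x) = 1 for x > 0 and -1 for x < 0. -/
/-!
For `x > 0` the sign pairs `x` with `-x`, so the integral is
`∫₀^∞ (e^{zx} - e^{-zx}) e^{-x²/2} dx = ∫₀^∞ 2 sinh(zx) e^{-x²/2} dx`. Expanding `sinh` and using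
the odd Gaussian moments `∫₀^∞ x^{2n+1} e^{-x²/2} dx = 2ⁿ n!` gives the series. Integrating term by
term is legitimate because `2ⁿ n! n! ≤ (2n+1)!`: the series of integrals of the absolute values is
dominated by an exponential series.
-/

open MeasureTheory Real Set Nat

theorem factorial_le_doubleFactorial_two_mul_add_one (n : ℕ) : n ! ≤ (2 * n + 1)‼ := by
  induction n with
  | zero => rfl
  | succ n ih =>
    rw [factorial_succ, show 2 * (n + 1) + 1 = 2 * n + 1 + 2 by ring, doubleFactorial_add_two]
    exact Nat.mul_le_mul (by omega) ih

theorem two_pow_mul_factorial_mul_factorial_le (n : ℕ) : 2 ^ n * n ! * n ! ≤ (2 * n + 1)! := by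
  rw [factorial_eq_mul_doubleFactorial, doubleFactorial_two_mul, mul_comm]
  exact Nat.mul_le_mul_right _ (factorial_le_doubleFactorial_two_mul_add_one n)

theorem summable_two_pow_mul_factorial_div_factorial_mul_pow (r : ℝ) :
    Summable fun n : ℕ => 2 ^ n * n ! / (2 * n + 1)! * r ^ n := by
  refine Summable.of_norm_bounded (Real.summable_pow_div_factorial |r|) fun n => ?_
  have h_fact : (2 : ℝ) ^ n * n ! * n ! ≤ (2 * n + 1)! :=
    mod_cast two_pow_mul_factorial_mul_factorial_le n
  have h_coeff : (2 : ℝ) ^ n * n ! / (2 * n + 1)! ≤ 1 / n ! := by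
    rw [div_le_div_iff₀ (by positivity) (by positivity)]
    linarith
  calc ‖2 ^ n * n ! / (2 * n + 1)! * r ^ n‖ = 2 ^ n * n ! / (2 * n + 1)! * |r| ^ n := by
        rw [norm_mul, norm_pow, Real.norm_of_nonneg (by positivity), Real.norm_eq_abs]
    _ ≤ 1 / n ! * |r| ^ n := by gcongr
    _ = |r| ^ n / n ! := by ring

theorem integral_Ioi_pow_two_mul_add_one_mul_exp_neg_mul_sq {b : ℝ} (hb : 0 < b) (n : ℕ) :
    ∫ x in Ioi (0 : ℝ), x ^ (2 * n + 1) * exp (-b * x ^ 2) = n ! / (2 * b ^ (n + 1)) := by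
  have h := integral_rpow_mul_exp_neg_mul_rpow two_pos
    (neg_one_lt_zero.trans_le (Nat.cast_nonneg (2 * n + 1))) hb
  simp only [rpow_natCast, rpow_two] at h
  rw [h, show -(((2 * n + 1 : ℕ) : ℝ) + 1) / 2 = -((n + 1 : ℕ) : ℝ) by push_cast; ring,
    show (((2 * n + 1 : ℕ) : ℝ) + 1) / 2 = n + 1 by push_cast; ring, Gamma_nat_eq_factorial,
    rpow_neg hb.le, rpow_natCast]
  ring

theorem integrableOn_Ioi_pow_mul_exp_neg_mul_sq {b : ℝ} (hb : 0 < b) (n : ℕ) :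
    IntegrableOn (fun x : ℝ => x ^ n * exp (-b * x ^ 2)) (Ioi 0) := by
  simpa only [rpow_natCast] using
    integrableOn_rpow_mul_exp_neg_mul_sq hb (neg_one_lt_zero.trans_le (Nat.cast_nonneg n))

theorem integral_mul_sign_eq_integral_Ioi {f : ℝ → ℂ} (hf : Integrable f) :
    ∫ x, f x * (Real.sign x : ℂ) = ∫ x in Ioi 0, (f x - f (-x)) := by
  have h_neg : EqOn (fun x => f x * (Real.sign x : ℂ)) (fun x => -f x) (Iio 0) := fun x hx => by
    simp [Real.sign_of_neg (show x < 0 from hx)]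
  have h_pos : EqOn (fun x => f x * (Real.sign x : ℂ)) f (Ioi 0) := fun x hx => by
    simp [Real.sign_of_pos (show 0 < x from hx)]
  have h_int_neg := hf.neg.integrableOn.congr_fun h_neg.symm measurableSet_Iio
  have h_int_pos := hf.integrableOn.congr_fun h_pos.symm measurableSet_Ioi
  calc ∫ x, f x * (Real.sign x : ℂ)
      = (∫ x in Iio 0, f x * (Real.sign x : ℂ)) + ∫ x in Ioi 0, f x * (Real.sign x : ℂ) := by
        rw [← integral_Iic_eq_integral_Iio, intervalIntegral.integral_Iic_add_Ioi
          ((integrableOn_Iic_iff_integrableOn_Iio).mpr h_int_neg) h_int_pos]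
    _ = -(∫ x in Ioi 0, f (-x)) + ∫ x in Ioi 0, f x := by
        rw [setIntegral_congr_fun measurableSet_Iio h_neg, integral_neg,
          setIntegral_congr_fun measurableSet_Ioi h_pos, integral_comp_neg_Ioi, neg_zero,
          integral_Iic_eq_integral_Iio]
    _ = ∫ x in Ioi 0, (f x - f (-x)) := by
        rw [integral_sub hf.integrableOn hf.comp_neg.integrableOn, neg_add_eq_sub]

theorem hasSum_cexp_sub_cexp_neg (z : ℂ) (x : ℝ) :
    HasSum (fun n : ℕ => 2 * z ^ (2 * n + 1) / (2 * n + 1)! *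
        ((x ^ (2 * n + 1) * rexp (-(1 / 2) * x ^ 2) : ℝ) : ℂ))
      (Complex.exp (z * x - x ^ 2 / 2) - Complex.exp (-(z * x) - x ^ 2 / 2)) := by
  have h_exponent : ((-(1 / 2) * x ^ 2 : ℝ) : ℂ) = -(x ^ 2 / 2) := by push_cast; ring
  have h_sinh : Complex.exp (z * x - x ^ 2 / 2) - Complex.exp (-(z * x) - x ^ 2 / 2)
      = 2 * Complex.sinh (z * x) * ((rexp (-(1 / 2) * x ^ 2) : ℝ) : ℂ) := by
    rw [Complex.ofReal_exp, h_exponent, Complex.sinh, sub_eq_add_neg (z * _),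
      sub_eq_add_neg (-(z * _)), Complex.exp_add, Complex.exp_add]
    ring
  rw [h_sinh]
  exact ((Complex.hasSum_sinh (z * x)).mul_left 2).mul_right _ |>.congr_fun fun n => by
    push_cast; ring

theorem hasSum_integral_Ioi_cexp_sub_cexp_neg (z : ℂ) :
    HasSum (fun n : ℕ => 2 * z ^ (2 * n + 1) / (2 * n + 1)! * (2 ^ n * n ! : ℝ))
      (∫ x in Ioi (0 : ℝ),
        (Complex.exp (z * x - x ^ 2 / 2) - Complex.exp (-(z * x) - x ^ 2 / 2))) := by
  set c : ℕ → ℂ := fun n => 2 * z ^ (2 * n + 1) / (2 * n + 1)!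
  set g : ℕ → ℝ → ℝ := fun n x => x ^ (2 * n + 1) * rexp (-(1 / 2) * x ^ 2)
  have hg_int n : IntegrableOn (g n) (Ioi 0) :=
    integrableOn_Ioi_pow_mul_exp_neg_mul_sq one_half_pos _
  have hg_integral n : ∫ x in Ioi 0, g n x = 2 ^ n * n ! := by
    rw [integral_Ioi_pow_two_mul_add_one_mul_exp_neg_mul_sq one_half_pos, one_div, inv_pow,
      pow_succ]
    field_simp
  have h_norm n : ∫ x in Ioi 0, ‖c n * g n x‖ =
      2 * ‖z‖ * (2 ^ n * n ! / (2 * n + 1)! * (‖z‖ ^ 2) ^ n) := by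
    have h_pos : ∀ x ∈ Ioi (0 : ℝ), ‖c n * g n x‖ = ‖c n‖ * g n x := fun x hx => by
      rw [norm_mul, Complex.norm_real,
        Real.norm_of_nonneg (mul_pos (pow_pos hx _) (exp_pos _)).le]
    rw [setIntegral_congr_fun measurableSet_Ioi h_pos, integral_const_mul, hg_integral]
    simp only [c, norm_div, norm_mul, norm_pow, Complex.norm_natCast, Complex.norm_ofNat]
    ring
  have h_summable := ((summable_two_pow_mul_factorial_div_factorial_mul_pow (‖z‖ ^ 2)).mul_left
    (2 * ‖z‖)).congr fun n => (h_norm n).symm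
  have h_termwise := hasSum_integral_of_summable_integral_norm
    (F := fun n x => c n * (g n x : ℂ)) (fun n => (hg_int n).ofReal.const_mul (c n)) h_summable
  rw [setIntegral_congr_fun measurableSet_Ioi
    fun x _ => (hasSum_cexp_sub_cexp_neg z x).tsum_eq.symm]
  refine h_termwise.congr_fun fun n => ?_
  rw [integral_const_mul, integral_complex_ofReal, hg_integral]

/-- `∫_ℝ e^{zx-x²/2} sgn(x) dx = Σ_ν (2^{ν+1} ν!/(2ν+1)!) z^{2ν+1}`. -/
theorem integral_exp_sgn (z : ℂ) :
    HasSum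
      (fun ν : ℕ =>
        (((2 : ℝ) ^ (ν + 1) * (Nat.factorial ν : ℝ) / (Nat.factorial (2 * ν + 1) : ℝ) : ℝ) : ℂ) *
          z ^ (2 * ν + 1))
      (∫ x : ℝ, Complex.exp (z * x - (x : ℂ) ^ 2 / 2) * (Real.sign x : ℂ)) := by
  have h_int : Integrable fun x : ℝ => Complex.exp (z * x - (x : ℂ) ^ 2 / 2) :=
    (integrable_cexp_quadratic (b := 1 / 2) (by norm_num) z 0).congr
      (.of_forall fun x => by ring_nf)
  rw [integral_mul_sign_eq_integral_Ioi h_int]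
  convert hasSum_integral_Ioi_cexp_sub_cexp_neg z using 1
  · ext n
    push_cast
    ring
  · simp only [Complex.ofReal_neg, mul_neg, neg_sq]
end
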